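/- arXiv:2208.00184 — 3 statements merged into one kernel-verified Lean document; each statement's English description precedes it below -/
import Mathlib

section
/- In a directed acyclic graph, if u and v are adjacent (consecutive) in some topological ordering of the vertices and (u,v) is an edge, then contracting u and v does not create a directed cycle; equivalently, the contracted graph is still acyclic. -/
/-- Contract the edge `(u,v)` of a directed graph: `u` and `v` are merged into a
single node (represented by `u`); every edge other than `(u,v)` itself is
redirected accordingly. -/
def contractEdge {V : Type*} [DecidableEq V] (E : V → V → Prop) (u v : V) :
    V → V → Prop :=
  fun a b => ∃ x y, E x y ∧ ¬(x = u ∧ y = v) ∧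
    (if x = v then u else x) = a ∧ (if y = v then u else y) = b

theorem Relation.not_transGen_self_of_map_lt {α β : Type*} [Preorder β] {r : α → α → Prop}
    (f : α → β) (hf : ∀ a b, r a b → f a < f b) (a : α) : ¬ Relation.TransGen r a a := by
  intro h
  have hlt : Relation.TransGen (· < ·) (f a) (f a) := h.lift f hf
  rw [Relation.transGen_eq_self] at hlt
  exact lt_irrefl _ hlt

/-- Merging `v` into `u` can only lower `σ`. The only edge it could make non-increasing is one
from some `x ≠ u` into `v`, and there `σ x < σ v = σ u + 1` forces `σ x < σ u`. -/
theorem lt_of_contractEdge {V : Type*} [DecidableEq V] {E : V → V → Prop} {σ : V → ℕ} {u v : V}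
    (hinj : Function.Injective σ) (htopo : ∀ a b, E a b → σ a < σ b)
    (hadj : σ v = σ u + 1) {a b : V} (hab : contractEdge E u v a b) : σ a < σ b := by
  obtain ⟨x, y, hxy, hne, rfl, rfl⟩ := hab
  have hσxy := htopo x y hxy
  by_cases hyv : y = v
  · subst hyv
    have hxv : x ≠ y := ne_of_apply_ne σ hσxy.ne
    have hσxu : σ x ≠ σ u := fun h => hne ⟨hinj h, rfl⟩
    simp only [hxv, if_false, if_true]
    omega
  · have hσ_merge_x : σ (if x = v then u else x) ≤ σ x := by
      split_ifs with hxv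
      · subst hxv; omega
      · exact le_rfl
    simp only [hyv, if_false]
    omega

theorem stmt_1_general {V : Type*} [DecidableEq V] (E : V → V → Prop)
    (σ : V → ℕ) (hinj : Function.Injective σ)
    (htopo : ∀ a b, E a b → σ a < σ b)
    (u v : V) (hadj : σ v = σ u + 1) :
    ∀ a, ¬ Relation.TransGen (contractEdge E u v) a a :=
  Relation.not_transGen_self_of_map_lt σ fun _ _ => lt_of_contractEdge hinj htopo hadj

/-- If `u` and `v` are consecutive in a topological ordering `σ` of a finite DAG
and `(u,v)` is an edge, then contracting `u` and `v` keeps the graph acyclic. -/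
theorem stmt_1 {V : Type*} [Fintype V] [DecidableEq V] (E : V → V → Prop)
    (σ : V → ℕ) (hinj : Function.Injective σ)
    (htopo : ∀ a b, E a b → σ a < σ b)
    (u v : V) (huv : E u v) (hadj : σ v = σ u + 1) :
    ∀ a, ¬ Relation.TransGen (contractEdge E u v) a a :=
  stmt_1_general E σ hinj htopo u v hadj
end

section
/- If merging an edge (u,v) in a DAG creates a directed cycle through the merged node x, then in the original graph there exists a directed path from u to v that does not use the edge (u,v). -/
open Relation

namespace ContractEdge

variable {V : Type*} {E : V → V → Prop} {u v : V}

variable (E u v) in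
def ReachableAvoiding (z : V) : Prop :=
  ∃ w, E u w ∧ w ≠ v ∧ ReflTransGen E w z

lemma ReachableAvoiding.tail {z y : V} (hz : ReachableAvoiding E u v z) (hzy : E z y) :
    ReachableAvoiding E u v y :=
  let ⟨w, huw, hwv, hwz⟩ := hz
  ⟨w, huw, hwv, hwz.tail hzy⟩

lemma reachableAvoiding_of_edge {y : V} (huy : E u y) (hne : ¬(u = u ∧ y = v)) :
    ReachableAvoiding E u v y :=
  ⟨y, huy, fun hyv => hne ⟨rfl, hyv⟩, .refl⟩

variable (E u v) in
def LiftInvariant (z : V) : Prop :=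
  TransGen E v z ∨ ReachableAvoiding E u v z

lemma LiftInvariant.tail {z y : V} (hz : LiftInvariant E u v z) (hzy : E z y) :
    LiftInvariant E u v y :=
  hz.imp (·.tail hzy) (·.tail hzy)

lemma LiftInvariant.of_self (hacyc : ∀ a, ¬ TransGen E a a) (huv : E u v)
    (hu : LiftInvariant E u v u) : LiftInvariant E u v v := by
  rcases hu with hvu | hu
  · exact absurd (hvu.tail huv) (hacyc v)
  · exact .inr (hu.tail huv)

variable [DecidableEq V]

def merge (u v : V) (z : V) : V := if z = v then u else z

lemma eq_or_eq_of_merge_eq_self {z : V} (h : merge u v z = u) : z = u ∨ z = v := by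
  unfold merge at h
  split_ifs at h with hz <;> simp [hz, h]

lemma eq_or_swap_of_merge_eq_merge {z x : V} (h : merge u v z = merge u v x) :
    z = x ∨ (z = u ∧ x = v) ∨ (z = v ∧ x = u) := by
  unfold merge at h
  split_ifs at h with hz hx hx <;> simp_all

lemma LiftInvariant.of_edge {x y : V} (hxy : E x y) (hne : ¬(x = u ∧ y = v))
    (hx : merge u v x = u) : LiftInvariant E u v y := by
  rcases eq_or_eq_of_merge_eq_self hx with rfl | rfl
  · exact .inr (reachableAvoiding_of_edge hxy hne)
  · exact .inl (.single hxy)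

lemma LiftInvariant.step (hacyc : ∀ a, ¬ TransGen E a a) (huv : E u v) {z x y : V}
    (hz : LiftInvariant E u v z) (hzx : merge u v z = merge u v x) (hxy : E x y)
    (hne : ¬(x = u ∧ y = v)) : LiftInvariant E u v y := by
  rcases eq_or_swap_of_merge_eq_merge hzx with rfl | ⟨rfl, rfl⟩ | ⟨rfl, rfl⟩
  · exact hz.tail hxy
  · exact (hz.of_self hacyc huv).tail hxy
  · exact .inr (reachableAvoiding_of_edge hxy hne)

lemma exists_liftInvariant (hacyc : ∀ a, ¬ TransGen E a a) (huv : E u v) {b : V}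
    (hb : TransGen (contractEdge E u v) u b) : ∃ z, merge u v z = b ∧ LiftInvariant E u v z := by
  induction hb with
  | single h =>
    obtain ⟨x, y, hxy, hne, hx, hy⟩ := h
    exact ⟨y, hy, .of_edge hxy hne hx⟩
  | tail _ h ih =>
    obtain ⟨z, hz, hinv⟩ := ih
    obtain ⟨x, y, hxy, hne, hx, hy⟩ := h
    exact ⟨y, hy, hinv.step hacyc huv (hz.trans hx.symm) hxy hne⟩

end ContractEdge

open ContractEdge in
theorem stmt_3_general {V : Type*} [DecidableEq V] (E : V → V → Prop)
    (hacyc : ∀ a, ¬ Relation.TransGen E a a) (u v : V) (huv : E u v)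
    (hcyc : Relation.TransGen (contractEdge E u v) u u) :
    ∃ w, E u w ∧ w ≠ v ∧ Relation.ReflTransGen E w v := by
  obtain ⟨z, hz, hinv⟩ := exists_liftInvariant hacyc huv hcyc
  have hv : LiftInvariant E u v v := by
    rcases eq_or_eq_of_merge_eq_self hz with rfl | rfl
    · exact hinv.of_self hacyc huv
    · exact hinv
  exact hv.resolve_left (hacyc v)

/-- If merging the edge `(u,v)` of a finite DAG creates a directed cycle through
the merged node (represented by `u`), then the original graph has a directed
path from `u` to `v` not using the edge `(u,v)`. -/
theorem stmt_3 {V : Type*} [Fintype V] [DecidableEq V] (E : V → V → Prop)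
    (hacyc : ∀ a, ¬ Relation.TransGen E a a) (u v : V) (huv : E u v)
    (hcyc : Relation.TransGen (contractEdge E u v) u u) :
    ∃ w, E u w ∧ w ≠ v ∧ Relation.ReflTransGen E w v :=
  stmt_3_general E hacyc u v huv hcyc
end

section
/- Merging a set S of vertices of a DAG into a single node (where S is a contiguous interval of some fixed topological ordering) yields an acyclic graph. -/
/-- Contract a set `S` of vertices into a single node, represented by `r ∈ S`:
edges with both endpoints in `S` (in particular self-loops at the merged node)
are removed, edges between `S` and its complement are redirected to/from `r`. -/
def contractSet {V : Type*} (E : V → V → Prop) (S : V → Prop) [DecidablePred S]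
    (r : V) : V → V → Prop :=
  fun a b => a ≠ b ∧ ∃ x y, E x y ∧
    (if S x then r else x) = a ∧ (if S y then r else y) = b

/-!
The topological order `σ` stays strictly increasing along every edge of the contracted graph,
hence along every path, so there is no cycle. For an edge leaving the merged node, coming from
`x ∈ S` into `y ∉ S`, we have `σ x < σ y`, and `σ y ≤ σ r` is impossible because `S` is an
interval of `σ` containing `x` and `r`; entering edges are symmetric.
-/

theorem Relation.TransGen.lt_of_forall_lt {α β : Type*} [Preorder β] {R : α → α → Prop}
    {f : α → β} (hf : ∀ a b, R a b → f a < f b) {a b : α} (h : Relation.TransGen R a b) :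
    f a < f b := by
  induction h with
  | single hab => exact hf _ _ hab
  | tail _ hbc ih => exact ih.trans (hf _ _ hbc)

section Contraction

variable {V α : Type*} [LinearOrder α] {E : V → V → Prop} {σ : V → α} {S : V → Prop}
  [DecidablePred S] {r : V}

theorem contractSet_lt (htopo : ∀ a b, E a b → σ a < σ b)
    (hS : ∀ x y z, S x → S y → σ x ≤ σ z → σ z ≤ σ y → S z) (hr : S r)
    {a b : V} (hab : contractSet E S r a b) : σ a < σ b := by
  obtain ⟨hne, x, y, hxy, rfl, rfl⟩ := hab
  have hlt := htopo x y hxy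
  by_cases hx : S x <;> by_cases hy : S y <;> simp only [hx, hy, if_true, if_false] at hne ⊢
  · exact absurd rfl hne
  · exact lt_of_not_ge fun hyr => hy (hS x r y hx hr hlt.le hyr)
  · exact lt_of_not_ge fun hrx => hx (hS r y x hr hy hrx hlt.le)
  · exact hlt

theorem contractSet_transGen_irrefl (htopo : ∀ a b, E a b → σ a < σ b)
    (hS : ∀ x y z, S x → S y → σ x ≤ σ z → σ z ≤ σ y → S z) (hr : S r) (a : V) :
    ¬ Relation.TransGen (contractSet E S r) a a := fun h =>
  lt_irrefl _ (h.lt_of_forall_lt fun _ _ hab => contractSet_lt htopo hS hr hab)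

end Contraction

theorem stmt_6_general {V : Type*} (E : V → V → Prop)
    (σ : V → ℕ)
    (htopo : ∀ a b, E a b → σ a < σ b)
    (i j : ℕ) (r : V) (hr : i ≤ σ r ∧ σ r ≤ j) :
    ∀ a, ¬ Relation.TransGen
      (contractSet E (fun x => i ≤ σ x ∧ σ x ≤ j) r) a a :=
  contractSet_transGen_irrefl htopo
    (fun _ _ _ hx hy hxz hzy => ⟨hx.1.trans hxz, hzy.trans hy.2⟩) hr

/-- Contracting a contiguous interval `S = σ⁻¹ [i, j]` of a topological
ordering `σ` of a finite DAG yields an acyclic graph. -/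
theorem stmt_6 {V : Type*} [Fintype V] [DecidableEq V] (E : V → V → Prop)
    (σ : V → ℕ) (hinj : Function.Injective σ)
    (htopo : ∀ a b, E a b → σ a < σ b)
    (i j : ℕ) (hij : i ≤ j) (r : V) (hr : i ≤ σ r ∧ σ r ≤ j) :
    ∀ a, ¬ Relation.TransGen
      (contractSet E (fun x => i ≤ σ x ∧ σ x ≤ j) r) a a :=
  stmt_6_general E σ htopo i j r hr
end
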